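/- arXiv:2403.07572 — 6 statements merged into one kernel-verified Lean document; each statement's English description precedes it below -/
import Mathlib

section
/- Let c_exp > 0 and d > 0 be real constants and let q > d. Define c_lin := d·c_exp and t_c := q/c_lin − 1/c_exp (which is positive). Then the function x : [0,∞) → ℝ defined by x(t) = q − c_lin·t for 0 ≤ t ≤ t_c and x(t) = (q − c_lin·t_c)·exp(−c_exp·(t − t_c)) for t > t_c is differentiable on [0,∞), satisfies x(0) = q, and satisfies the ODE x'(t) = −c_exp·sat_d(x(t)) for every t ≥ 0. -/
/-- The saturation function `sat_d : ℝ → [−d,d]`: identity on `[-d,d]`,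
clipped to `d` above and `-d` below. -/
noncomputable def sat (d x : ℝ) : ℝ := max (-d) (min d x)

/-!
While `x ≥ d` the saturation is the constant `d`, so the solution falls linearly with slope
`-d·c_exp`; `t_c` is exactly the time at which it reaches `d`. From then on `0 < x ≤ d`, the
saturation is the identity and the solution is the exponential `d·e^{-c_exp (t - t_c)}`, whose
slope at `t_c` is again `-d·c_exp`. So the two pieces glue to a solution that is
differentiable everywhere.
-/

open Set Filter Topology Real

theorem sat_eq_self {d y : ℝ} (h₁ : -d ≤ y) (h₂ : y ≤ d) : sat d y = y := by
  rw [sat, min_eq_right h₂, max_eq_right h₁]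

theorem sat_eq_of_le {d y : ℝ} (hd : 0 ≤ d) (h : d ≤ y) : sat d y = d := by
  rw [sat, min_eq_left h, max_eq_right (by linarith)]

theorem HasDerivAt.ite_le {E : Type*} [NormedAddCommGroup E] [NormedSpace ℝ E]
    {f g f' g' : ℝ → E} {a t : ℝ}
    (hf : ∀ s ≤ a, HasDerivAt f (f' s) s) (hg : ∀ s ≥ a, HasDerivAt g (g' s) s)
    (hfg : f a = g a) (hfg' : f' a = g' a) :
    HasDerivAt (fun s => if s ≤ a then f s else g s) (if t ≤ a then f' t else g' t) t := by
  rcases lt_trichotomy t a with hlt | rfl | hgt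
  · rw [if_pos hlt.le]
    refine (hf t hlt.le).congr_of_eventuallyEq ?_
    filter_upwards [Iio_mem_nhds hlt] with s hs
    rw [if_pos (le_of_lt hs)]
  · rw [if_pos le_rfl]
    have hleft : HasDerivWithinAt (fun s => if s ≤ t then f s else g s) (f' t) (Iic t) t :=
      (hf t le_rfl).hasDerivWithinAt.congr (fun s hs => if_pos hs) (if_pos le_rfl)
    have hright : HasDerivWithinAt (fun s => if s ≤ t then f s else g s) (f' t) (Ici t) t := by
      refine hfg' ▸ (hg t le_rfl).hasDerivWithinAt.congr (fun s hs => ?_) (by simp [hfg])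
      rcases (mem_Ici.mp hs).eq_or_lt with rfl | hts
      · simp [hfg]
      · rw [if_neg (not_le.mpr hts)]
    simpa [Iic_union_Ici] using hleft.union hright
  · rw [if_neg (not_le.mpr hgt)]
    refine (hg t hgt.le).congr_of_eventuallyEq ?_
    filter_upwards [Ioi_mem_nhds hgt] with s hs
    rw [if_neg (not_le.mpr hs)]

theorem hasDerivAt_mul_exp_neg_mul_sub (A c a t : ℝ) :
    HasDerivAt (fun s => A * exp (-c * (s - a))) (-c * (A * exp (-c * (t - a)))) t := by
  have := ((((hasDerivAt_id t).sub_const a).const_mul (-c)).exp).const_mul A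
  exact this.congr_deriv (by simp only [id]; ring)

/-- the explicit linear-exponential function solves the
saturated scalar ODE `x' = -c_exp · sat_d(x)`, `x(0) = q > d`. -/
theorem stmt0 (cexp d q clin tc : ℝ) (hc : 0 < cexp) (hd : 0 < d) (hq : d < q)
    (hclin : clin = d * cexp) (htc : tc = q / clin - 1 / cexp)
    (x : ℝ → ℝ)
    (hx : ∀ t : ℝ, x t = if t ≤ tc then q - clin * t
      else (q - clin * tc) * Real.exp (-cexp * (t - tc))) :
    0 < tc ∧ x 0 = q ∧ DifferentiableOn ℝ x (Set.Ici 0) ∧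
      ∀ t ≥ (0:ℝ), HasDerivWithinAt x (-cexp * sat d (x t)) (Set.Ici 0) t := by
  have hclin0 : 0 < clin := by rw [hclin]; positivity
  have hcross : q - clin * tc = d := by rw [htc, hclin]; field_simp; ring
  have htc0 : 0 < tc := pos_of_mul_pos_right (by linarith : 0 < clin * tc) hclin0.le
  have hx_eq : x = fun t => if t ≤ tc then q - clin * t else d * exp (-cexp * (t - tc)) := by
    funext t; rw [hx, hcross]
  have hderiv (t : ℝ) : HasDerivAt x
      (if t ≤ tc then -clin else -cexp * (d * exp (-cexp * (t - tc)))) t := by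
    have hlin (s : ℝ) : HasDerivAt (fun s => q - clin * s) (-clin) s := by
      simpa using ((hasDerivAt_id s).const_mul clin).const_sub q
    rw [hx_eq]
    refine HasDerivAt.ite_le (f' := fun _ => -clin) (fun s _ => hlin s)
      (fun s _ => hasDerivAt_mul_exp_neg_mul_sub d cexp tc s) (by simp [hcross]) ?_
    simp [hclin, mul_comm]
  have hode (t : ℝ) : HasDerivAt x (-cexp * sat d (x t)) t := by
    refine (hderiv t).congr_deriv ?_
    split_ifs with ht
    · have hdx : d ≤ x t := by rw [hx, if_pos ht]; nlinarith
      rw [sat_eq_of_le hd.le hdx, hclin]; ring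
    · have hexp_le : exp (-cexp * (t - tc)) ≤ 1 := exp_le_one_iff.mpr (by nlinarith)
      have hxt : x t = d * exp (-cexp * (t - tc)) := by rw [hx, if_neg ht, hcross]
      rw [hxt, sat_eq_self (by nlinarith [exp_pos (-cexp * (t - tc))]) (by nlinarith)]
  refine ⟨htc0, by simp [hx, htc0.le], ?_, fun t _ => (hode t).hasDerivWithinAt⟩
  exact fun t _ => (hode t).differentiableAt.differentiableWithinAt
end

section
/- Let c_exp > 0 and r > 0 be real constants, and let g : [0,∞) → ℝ be a continuous nonnegative function with g(0) = q > r such that the upper-right Dini derivative satisfies D⁺g(t) ≤ −c_exp·sat_r(g(t)) for every t ≥ 0. Then for all t ≥ 0 it holds that g(t) ≤ linexp(t; q, c_lin, c_exp, t_c), where c_lin = c_exp·r and t_c = (q − r)/c_lin. -/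
/-- The linear-exponential function `linexp(t; q, c_lin, c_exp, t_c)`. -/
noncomputable def linexp (q clin cexp tc t : ℝ) : ℝ :=
  if t ≤ tc then q - clin * t else (q - clin * tc) * Real.exp (-cexp * (t - tc))

/-- The upper-right Dini derivative `D⁺f(t) = limsup_{h→0⁺} (f(t+h) − f(t))/h`. -/
noncomputable def diniDeriv (f : ℝ → ℝ) (t : ℝ) : ℝ :=
  Filter.limsup (fun h : ℝ => (f (t + h) - f t) / h) (nhdsWithin 0 (Set.Ioi 0))

/-!
`linexp` is the solution of `y' = -c_exp · sat_r(y)`, `y(0) = q`: it falls linearly with slope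
`-c_exp · r` until it reaches `r` at `t_c`, then decays exponentially. Since
`y ↦ -c_exp · sat_r(y)` is nonincreasing, no Lipschitz estimate is needed to compare `g` with this
solution: `g` stays below the fence `linexp + ε (t + 1)` for every `ε > 0`, because at a contact
point `g > linexp`, hence `D⁺g ≤ -c_exp · sat_r(g) ≤ -c_exp · sat_r(linexp)`, strictly below the
slope of the fence.
-/

open Set Filter Topology

/-- `image_le_of_liminf_slope_right_lt_deriv_boundary'` with the slope bound required only at
contact points: away from them the right slopes of `f` need not be bounded above. -/
theorem image_le_of_liminf_slope_right_lt_deriv_boundary_at_contact {f B B' : ℝ → ℝ} {a b : ℝ}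
    (hf : ContinuousOn f (Icc a b)) (hB : ContinuousOn B (Icc a b))
    (hB' : ∀ x ∈ Ico a b, HasDerivWithinAt B (B' x) (Ici x) x) (ha : f a ≤ B a)
    (contact : ∀ x ∈ Ico a b, f x = B x → ∃ r < B' x, ∃ᶠ z in 𝓝[>] x, slope f x z < r) :
    ∀ ⦃x⦄, x ∈ Icc a b → f x ≤ B x := by
  have hfB : ContinuousOn (fun x => (f x, B x)) (Icc a b) := hf.prodMk hB
  have hclosed : IsClosed ({x | f x ≤ B x} ∩ Icc a b) := by
    rw [inter_comm]
    exact hfB.preimage_isClosed_of_isClosed isClosed_Icc OrderClosedTopology.isClosed_le'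
  refine hclosed.Icc_subset_of_forall_exists_gt ha ?_
  rintro x ⟨hxB : f x ≤ B x, hx⟩ y hy
  rcases hxB.lt_or_eq with hlt | heq
  · have hnear : ∀ᶠ z in 𝓝[Icc a b] x, f z < B z :=
      hfB x (Ico_subset_Icc_self hx) (isOpen_lt continuous_fst continuous_snd |>.mem_nhds hlt)
    have hright : ∀ᶠ z in 𝓝[>] x, f z < B z :=
      nhdsWithin_le_of_mem (Icc_mem_nhdsGT_of_mem hx) hnear
    obtain ⟨z, hz, hzy⟩ := (hright.and (Ioc_mem_nhdsGT hy)).exists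
    exact ⟨z, hz.le, hzy⟩
  · obtain ⟨r, hrB, hfr⟩ := contact x hx heq
    have hBr : ∀ᶠ z in 𝓝[>] x, r < slope B x z :=
      (hasDerivWithinAt_iff_tendsto_slope' (lt_irrefl x)).1 (hB' x hx).Ioi_of_Ici
        (Ioi_mem_nhds hrB)
    obtain ⟨z, hfz, hBz, hz⟩ := (hfr.and_eventually (hBr.and (Ioc_mem_nhdsGT hy))).exists
    refine ⟨z, ?_, hz⟩
    have := (hfz.trans hBz).le
    rwa [slope_def_field, slope_def_field, div_le_div_iff_of_pos_right (sub_pos.2 hz.1), heq,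
      sub_le_sub_iff_right] at this

theorem le_solution_of_liminf_slope_right_le_of_antitone {F f L : ℝ → ℝ} {a b : ℝ}
    (hF : Antitone F) (hf : ContinuousOn f (Icc a b)) (hL : ContinuousOn L (Icc a b))
    (hL' : ∀ x ∈ Ico a b, HasDerivWithinAt L (F (L x)) (Ici x) x)
    (hslope : ∀ x ∈ Ico a b, L x < f x → ∀ r, F (f x) < r → ∃ᶠ z in 𝓝[>] x, slope f x z < r)
    (ha : f a ≤ L a) : ∀ ⦃x⦄, x ∈ Icc a b → f x ≤ L x := by
  intro x hx
  have hfence : ∀ ε > 0, f x ≤ L x + ε * (x - a + 1) := by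
    intro ε hε
    have hB' : ∀ y ∈ Ico a b, HasDerivWithinAt (fun y => L y + ε * (y - a + 1))
        (F (L y) + ε * 1) (Ici y) y := fun y hy =>
      (hL' y hy).add ((((hasDerivWithinAt_id y _).sub_const a).add_const 1).const_mul ε)
    refine image_le_of_liminf_slope_right_lt_deriv_boundary_at_contact hf (by fun_prop) hB'
      (by simp only [sub_self, zero_add, mul_one]; linarith) ?_ hx
    intro y hy hcontact
    have hLy : L y < f y := by
      rw [hcontact]
      have : 0 < ε * (y - a + 1) := mul_pos hε (by linarith [hy.1])
      linarith
    obtain ⟨r, hFr, hr⟩ := exists_between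
      ((hF hLy.le).trans_lt (lt_add_of_pos_right (F (L y)) (mul_pos hε one_pos)))
    exact ⟨r, hr, hslope y hy hLy r hFr⟩
  have hlim : Tendsto (fun ε => L x + ε * (x - a + 1)) (𝓝[>] 0) (𝓝 (L x)) := by
    have : Continuous fun ε : ℝ => L x + ε * (x - a + 1) := by fun_prop
    simpa using this.continuousWithinAt.tendsto (x := 0) (s := Ioi 0)
  exact ge_of_tendsto hlim (eventually_nhdsWithin_of_forall hfence)

theorem eventually_slope_lt_of_diniDeriv_lt {f : ℝ → ℝ} {x r : ℝ} (hneg : diniDeriv f x < 0)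
    (hr : diniDeriv f x < r) : ∀ᶠ z in 𝓝[>] x, slope f x z < r := by
  -- an unbounded `limsup` in `ℝ` is `0`
  have hbdd : IsBoundedUnder (· ≤ ·) (𝓝[>] 0) fun h => (f (x + h) - f x) / h := by
    by_contra h
    exact hneg.ne (Real.limsup_of_not_isBoundedUnder h)
  have hshift : Tendsto (fun z => z - x) (𝓝[>] x) (𝓝[>] 0) := by
    refine tendsto_nhdsWithin_iff.2 ⟨?_, ?_⟩
    · simpa using (continuous_sub_right x).continuousWithinAt.tendsto (x := x) (s := Ioi x)
    · filter_upwards [self_mem_nhdsWithin] with z (hz : x < z) using sub_pos.2 hz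
  filter_upwards [hshift.eventually (eventually_lt_of_limsup_lt hr hbdd)] with z hz
  rw [add_sub_cancel] at hz
  rwa [slope_def_field]

theorem monotone_sat (d : ℝ) : Monotone (sat d) :=
  fun _ _ h => max_le_max le_rfl (min_le_min le_rfl h)

theorem sat_of_le {d x : ℝ} (hd : 0 ≤ d) (h : d ≤ x) : sat d x = d := by
  rw [sat, min_eq_left h, max_eq_right (by linarith)]

theorem sat_of_abs_le {d x : ℝ} (h : |x| ≤ d) : sat d x = x := by
  rw [abs_le] at h
  rw [sat, min_eq_right h.2, max_eq_right h.1]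

theorem sat_pos {d x : ℝ} (hd : 0 < d) (hx : 0 < x) : 0 < sat d x :=
  lt_max_of_lt_right (lt_min hd hx)

theorem linexp_of_le {q clin cexp tc t : ℝ} (h : t ≤ tc) :
    linexp q clin cexp tc t = q - clin * t :=
  if_pos h

theorem linexp_of_ge {q clin cexp tc t : ℝ} (h : tc ≤ t) :
    linexp q clin cexp tc t = (q - clin * tc) * Real.exp (-cexp * (t - tc)) := by
  rcases h.eq_or_lt with rfl | hlt
  · simp [linexp]
  · exact if_neg hlt.not_ge

theorem continuous_linexp (q clin cexp tc : ℝ) : Continuous (linexp q clin cexp tc) :=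
  Continuous.if_le (by fun_prop) (by fun_prop) continuous_id continuous_const
    fun t ht => by simp [ht]

theorem linexp_pos {q clin cexp tc : ℝ} (hclin : 0 ≤ clin) (hq : 0 < q - clin * tc) (t : ℝ) :
    0 < linexp q clin cexp tc t := by
  rcases le_total t tc with ht | ht
  · rw [linexp_of_le ht]
    nlinarith [mul_le_mul_of_nonneg_left ht hclin]
  · rw [linexp_of_ge ht]
    positivity

theorem sub_mul_sub_div_cancel (q r : ℝ) {c : ℝ} (hc : c ≠ 0) : q - c * ((q - r) / c) = r := by
  rw [mul_div_cancel₀ _ hc, sub_sub_cancel]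

theorem hasDerivWithinAt_linexp {cexp r : ℝ} (q : ℝ) (hc : 0 < cexp) (hr : 0 < r) (x : ℝ) :
    HasDerivWithinAt (linexp q (cexp * r) cexp ((q - r) / (cexp * r)))
      (-cexp * sat r (linexp q (cexp * r) cexp ((q - r) / (cexp * r)) x)) (Ici x) x := by
  set tc := (q - r) / (cexp * r)
  have hcross : q - cexp * r * tc = r := sub_mul_sub_div_cancel q r (mul_pos hc hr).ne'
  rcases lt_or_ge x tc with hx | hx
  · have hLx : r ≤ linexp q (cexp * r) cexp tc x := by
      rw [linexp_of_le hx.le]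
      nlinarith [mul_lt_mul_of_pos_left hx (mul_pos hc hr)]
    have hlin : HasDerivAt (fun y => q - cexp * r * y) (-(cexp * r)) x := by
      simpa using ((hasDerivAt_id x).const_mul (cexp * r)).const_sub q
    have heq : linexp q (cexp * r) cexp tc =ᶠ[𝓝 x] fun y => q - cexp * r * y :=
      eventually_of_mem (Iio_mem_nhds hx) fun y hy => linexp_of_le (le_of_lt hy)
    rw [sat_of_le hr.le hLx, neg_mul]
    exact (hlin.congr_of_eventuallyEq heq).hasDerivWithinAt
  · have hexp : ∀ y, tc ≤ y →
        linexp q (cexp * r) cexp tc y = r * Real.exp (-cexp * (y - tc)) := fun y hy => by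
      rw [linexp_of_ge hy, hcross]
    have hLx : |linexp q (cexp * r) cexp tc x| ≤ r := by
      rw [hexp x hx, abs_of_pos (by positivity)]
      refine mul_le_of_le_one_right hr.le (Real.exp_le_one_iff.2 ?_)
      nlinarith [sub_nonneg.2 hx]
    have hE : HasDerivAt (fun y => r * Real.exp (-cexp * (y - tc)))
        (-cexp * (r * Real.exp (-cexp * (x - tc)))) x := by
      refine ((((hasDerivAt_id x).sub_const tc).const_mul (-cexp)).exp.const_mul r).congr_deriv ?_
      simp only [id]
      ring
    rw [sat_of_abs_le hLx, hexp x hx]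
    exact hE.hasDerivWithinAt.congr (fun y hy => hexp y (hx.trans hy)) (hexp x hx)

theorem stmt1_general (cexp r q : ℝ) (hc : 0 < cexp) (hr : 0 < r) (hq : r < q)
    (g : ℝ → ℝ) (hgc : ContinuousOn g (Set.Ici 0))
    (hg0 : g 0 = q)
    (hdini : ∀ t ≥ (0:ℝ), diniDeriv g t ≤ -cexp * sat r (g t)) :
    ∀ t ≥ (0:ℝ), g t ≤ linexp q (cexp * r) cexp ((q - r) / (cexp * r)) t := by
  intro t ht
  have hF : Antitone fun y => -cexp * sat r y :=
    fun _ _ h => mul_le_mul_of_nonpos_left (monotone_sat r h) (neg_nonpos.2 hc.le)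
  have hLpos : ∀ x, 0 < linexp q (cexp * r) cexp ((q - r) / (cexp * r)) x :=
    linexp_pos (mul_pos hc hr).le (by rwa [sub_mul_sub_div_cancel q r (mul_pos hc hr).ne'])
  refine le_solution_of_liminf_slope_right_le_of_antitone hF
    (hgc.mono Icc_subset_Ici_self) (continuous_linexp _ _ _ _).continuousOn
    (fun x _ => hasDerivWithinAt_linexp q hc hr x) ?_ ?_ ⟨ht, le_rfl⟩
  · intro x hx hgx s hs
    have hsat : 0 < sat r (g x) := sat_pos hr ((hLpos x).trans hgx)
    have hneg : diniDeriv g x < 0 := (hdini x hx.1).trans_lt (by nlinarith)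
    exact (eventually_slope_lt_of_diniDeriv_lt hneg ((hdini x hx.1).trans_lt hs)).frequently
  · rw [hg0, linexp_of_le (div_nonneg (sub_nonneg.2 hq.le) (mul_pos hc hr).le), mul_zero, sub_zero]

/-- a continuous nonnegative function whose Dini derivative is
bounded by the saturated decay `-c_exp · sat_r(g)` is bounded by the
linear-exponential function. -/
theorem stmt1 (cexp r q : ℝ) (hc : 0 < cexp) (hr : 0 < r) (hq : r < q)
    (g : ℝ → ℝ) (hgc : ContinuousOn g (Set.Ici 0))
    (hgnn : ∀ t ≥ (0:ℝ), 0 ≤ g t) (hg0 : g 0 = q)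
    (hdini : ∀ t ≥ (0:ℝ), diniDeriv g t ≤ -cexp * sat r (g t)) :
    ∀ t ≥ (0:ℝ), g t ≤ linexp q (cexp * r) cexp ((q - r) / (cexp * r)) t :=
  stmt1_general cexp r q hc hr hq g hgc hg0 hdini
end

section
/- Let E be a finite-dimensional real vector space equipped with two norms N_G and N_L, with constants k1, k2 > 0 satisfying N_L ≤ k1·N_G and N_G ≤ k2·N_L pointwise; set k := k1·k2. Let φ : [0,∞) × E → E satisfy: (i) nonexpansiveness, N_G(φ(t,x) − φ(t,y)) ≤ N_G(x − y) for all t ≥ 0 and x, y ∈ E; (ii) there are x* ∈ E, c_exp > 0, r > 0 such that for every y with N_G(y − x*) ≤ r and every t ≥ 0, N_L(φ(t,y) − x*) ≤ exp(−c_exp·t)·N_L(y − x*); (iii) x* is an equilibrium, φ(t,x*) = x* for all t ≥ 0. Fix ρ ∈ (0,1) and set t_ρ := ln(k·ρ⁻¹)/c_exp. Then for every x0 with N_G(x0 − x*) > r, it holds that N_G(φ(t_ρ, x0) − x*) ≤ N_G(x0 − x*) − r·(1 − ρ). -/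
/-! Place `y` on the segment from `x*` to `x₀` at `N_G`-distance `r` from `x*`, hence at distance
`N_G(x₀ − x*) − r` from `x₀`. Nonexpansiveness keeps `φ(t, x₀)` within that distance of `φ(t, y)`,
while `y` lies in the ball, where `N_L`-contraction, converted to `N_G` at the price of the factor
`k`, brings `φ(t_ρ, y)` to `N_G`-distance `k · e^{−c_exp t_ρ} · r = ρ r` from `x*`. The triangle
inequality combines the two bounds. -/

open Real

lemma le_mul_of_le_mul_of_equivalent {E : Type*} {NG NL : E → ℝ} {k1 k2 : ℝ} (hk2 : 0 ≤ k2)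
    (hLG : ∀ x, NL x ≤ k1 * NG x) (hGL : ∀ x, NG x ≤ k2 * NL x) {u v : E} {c : ℝ}
    (hc : 0 ≤ c) (h : NL u ≤ c * NL v) : NG u ≤ k1 * k2 * c * NG v :=
  calc NG u ≤ k2 * NL u := hGL u
    _ ≤ k2 * (c * (k1 * NG v)) := by gcongr; exact h.trans (by gcongr; exact hLG v)
    _ = k1 * k2 * c * NG v := by ring

lemma exp_neg_mul_log_div {a c : ℝ} (hc : c ≠ 0) (ha : 0 < a) :
    exp (-c * (log a / c)) = a⁻¹ := by
  rw [show -c * (log a / c) = -log a by field_simp, exp_neg, exp_log ha]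

section Homogeneous

variable {E : Type*} [AddCommGroup E] [Module ℝ E] {N : E → ℝ}

lemma exists_sub_eq_and_sub_eq_sub (hsmul : ∀ (a : ℝ) (x : E), N (a • x) = |a| * N x)
    {x z : E} {r : ℝ} (hr : 0 ≤ r) (hrx : r ≤ N (x - z)) :
    ∃ y, N (y - z) = r ∧ N (x - y) = N (x - z) - r := by
  set d := N (x - z)
  have hrd : r / d * d = r := div_mul_cancel_of_imp fun hd => le_antisymm (hd ▸ hrx) hr
  have ha0 : 0 ≤ r / d := div_nonneg hr (hr.trans hrx)
  have ha1 : r / d ≤ 1 := div_le_one_of_le₀ hrx (hr.trans hrx)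
  refine ⟨z + (r / d) • (x - z), ?_, ?_⟩
  · rw [add_sub_cancel_left, hsmul, abs_of_nonneg ha0, hrd]
  · rw [show x - (z + (r / d) • (x - z)) = (1 - r / d) • (x - z) by module, hsmul,
      abs_of_nonneg (sub_nonneg.2 ha1)]
    linear_combination -hrd

theorem le_sub_of_nonexpansive_of_contracting_on_ball
    (hsmul : ∀ (a : ℝ) (x : E), N (a • x) = |a| * N x) (hadd : ∀ x y, N (x + y) ≤ N x + N y)
    {f : E → E} {xs : E} {r q : ℝ} (hr : 0 ≤ r)
    (hnonexp : ∀ x y, N (f x - f y) ≤ N (x - y))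
    (hcontr : ∀ y, N (y - xs) ≤ r → N (f y - xs) ≤ q * N (y - xs))
    {x : E} (hx : r ≤ N (x - xs)) :
    N (f x - xs) ≤ N (x - xs) - r * (1 - q) := by
  obtain ⟨y, hy, hxy⟩ := exists_sub_eq_and_sub_eq_sub hsmul hr hx
  calc N (f x - xs) = N ((f x - f y) + (f y - xs)) := by rw [sub_add_sub_cancel]
    _ ≤ N (x - y) + q * N (y - xs) := (hadd _ _).trans (add_le_add (hnonexp x y) (hcontr y hy.le))
    _ = N (x - xs) - r * (1 - q) := by rw [hxy, hy]; ring

end Homogeneous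

theorem stmt3_general (E : Type*) [AddCommGroup E] [Module ℝ E]
    (NG NL : E → ℝ)
    (hGsmul : ∀ (a : ℝ) (x : E), NG (a • x) = |a| * NG x)
    (hGadd : ∀ x y, NG (x + y) ≤ NG x + NG y)
    (k1 k2 k : ℝ) (hk2 : 0 < k2) (hk : k = k1 * k2)
    (hLG : ∀ x, NL x ≤ k1 * NG x) (hGL : ∀ x, NG x ≤ k2 * NL x)
    (φ : ℝ → E → E)
    (hnonexp : ∀ t ≥ (0:ℝ), ∀ x y : E, NG (φ t x - φ t y) ≤ NG (x - y))
    (xs : E) (cexp r : ℝ) (hc : 0 < cexp) (hr : 0 < r)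
    (hcontr : ∀ y, NG (y - xs) ≤ r → ∀ t ≥ (0:ℝ),
      NL (φ t y - xs) ≤ Real.exp (-cexp * t) * NL (y - xs))
    (ρ tρ : ℝ) (hρ0 : 0 < ρ) (hρ1 : ρ < 1)
    (htρ : tρ = Real.log (k * ρ⁻¹) / cexp) :
    ∀ x0 : E, r < NG (x0 - xs) →
      NG (φ tρ x0 - xs) ≤ NG (x0 - xs) - r * (1 - ρ) := by
  intro x0 hx0
  have hk_one : 1 ≤ k := by
    have h := le_mul_of_le_mul_of_equivalent hk2.le hLG hGL zero_le_one (one_mul (NL (x0 - xs))).ge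
    rw [hk]
    nlinarith
  have hkρ : 1 ≤ k * ρ⁻¹ := one_le_mul_of_one_le_of_one_le hk_one ((one_le_inv₀ hρ0).2 hρ1.le)
  have htρ0 : 0 ≤ tρ := htρ ▸ div_nonneg (log_nonneg hkρ) hc.le
  have hexp : exp (-cexp * tρ) = ρ / k := by
    rw [htρ, exp_neg_mul_log_div hc.ne' (by linarith), mul_inv, inv_inv, div_eq_inv_mul]
  refine le_sub_of_nonexpansive_of_contracting_on_ball hGsmul hGadd hr.le (hnonexp tρ htρ0)
    (fun y hy => ?_) hx0.le
  calc NG (φ tρ y - xs) ≤ k1 * k2 * exp (-cexp * tρ) * NG (y - xs) :=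
        le_mul_of_le_mul_of_equivalent hk2.le hLG hGL (exp_pos _).le (hcontr y hy tρ htρ0)
    _ = ρ * NG (y - xs) := by rw [hexp, ← hk]; field_simp

/-- for a flow that is nonexpansive in `N_G` on all of `E` and
exponentially contracting toward the equilibrium `x*` in `N_L` on the
`N_G`-ball of radius `r`, after the ρ-contraction time
`t_ρ = ln(k·ρ⁻¹)/c_exp` the `N_G`-distance to `x*` decreases by at least
`r·(1−ρ)` for initial conditions outside the ball. -/
theorem stmt3 (E : Type*) [AddCommGroup E] [Module ℝ E] [FiniteDimensional ℝ E]
    (NG NL : E → ℝ)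
    (hGnn : ∀ x, 0 ≤ NG x) (hGdef : ∀ x, NG x = 0 ↔ x = 0)
    (hGsmul : ∀ (a : ℝ) (x : E), NG (a • x) = |a| * NG x)
    (hGadd : ∀ x y, NG (x + y) ≤ NG x + NG y)
    (hLnn : ∀ x, 0 ≤ NL x) (hLdef : ∀ x, NL x = 0 ↔ x = 0)
    (hLsmul : ∀ (a : ℝ) (x : E), NL (a • x) = |a| * NL x)
    (hLadd : ∀ x y, NL (x + y) ≤ NL x + NL y)
    (k1 k2 k : ℝ) (hk1 : 0 < k1) (hk2 : 0 < k2) (hk : k = k1 * k2)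
    (hLG : ∀ x, NL x ≤ k1 * NG x) (hGL : ∀ x, NG x ≤ k2 * NL x)
    (φ : ℝ → E → E)
    (hnonexp : ∀ t ≥ (0:ℝ), ∀ x y : E, NG (φ t x - φ t y) ≤ NG (x - y))
    (xs : E) (cexp r : ℝ) (hc : 0 < cexp) (hr : 0 < r)
    (hcontr : ∀ y, NG (y - xs) ≤ r → ∀ t ≥ (0:ℝ),
      NL (φ t y - xs) ≤ Real.exp (-cexp * t) * NL (y - xs))
    (heq : ∀ t ≥ (0:ℝ), φ t xs = xs)
    (ρ tρ : ℝ) (hρ0 : 0 < ρ) (hρ1 : ρ < 1)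
    (htρ : tρ = Real.log (k * ρ⁻¹) / cexp) :
    ∀ x0 : E, r < NG (x0 - xs) →
      NG (φ tρ x0 - xs) ≤ NG (x0 - xs) - r * (1 - ρ) :=
  stmt3_general E NG NL hGsmul hGadd k1 k2 k hk2 hk hLG hGL φ hnonexp xs cexp r hc hr hcontr ρ tρ
    hρ0 hρ1 htρ
end

section
/- Let E be a finite-dimensional real vector space equipped with two norms N_G and N_L, with constants k1, k2 > 0 satisfying N_L ≤ k1·N_G and N_G ≤ k2·N_L pointwise; set k := k1·k2. Let φ : [0,∞) × E → E satisfy the semiflow property φ(0,x) = x and φ(t+s, x) = φ(t, φ(s,x)) for all t, s ≥ 0, together with: (i) N_G(φ(t,x) − φ(t,y)) ≤ N_G(x − y) for all t ≥ 0 and x, y ∈ E; (ii) there are x* ∈ E with φ(t,x*) = x* for all t, c_exp > 0, and r > 0 such that for every y with N_G(y − x*) ≤ r and every t ≥ 0, N_L(φ(t,y) − x*) ≤ exp(−c_exp·t)·N_L(y − x*). Fix ρ ∈ (0,1), set t_ρ := ln(k·ρ⁻¹)/c_exp, and let x0 satisfy N_G(x0 − x*) > r. Then for every natural number i with i·r·(1−ρ)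 ≤ N_G(x0 − x*) − r, it holds that N_G(φ(i·t_ρ, x0) − x*) ≤ N_G(x0 − x*) − i·r·(1 − ρ). -/
/-!
Take `y` outside the `N_G`-ball of radius `r` around `x*` and let `z` be the point where the
segment from `x*` to `y` meets its boundary, so `N_G(y - z) = N_G(y - x*) - r`. Transported to
`N_G` at the cost of the factor `k`, the `N_L`-contraction brings `z` within `ρ r` of `x*` after
time `t_ρ`, while nonexpansiveness keeps `φ(t_ρ, y)` within `N_G(y - z)` of `φ(t_ρ, z)`. Hence
each step of length `t_ρ` lowers the distance to `x*` by `(1 - ρ) r`, or lands it below `ρ r`;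
the bound on `i` keeps the claimed estimate above `ρ r`, so the first case governs.
-/

open Real

noncomputable def contractionTime (k ρ c : ℝ) : ℝ := Real.log (k * ρ⁻¹) / c

lemma contractionTime_nonneg {k ρ c : ℝ} (hc : 0 < c) (hk : 1 ≤ k) (hρ0 : 0 < ρ) (hρ1 : ρ ≤ 1) :
    0 ≤ contractionTime k ρ c := by
  have : 1 ≤ k * ρ⁻¹ := one_le_mul_of_one_le_of_one_le hk (one_le_inv₀ hρ0 |>.mpr hρ1)
  exact div_nonneg (Real.log_nonneg this) hc.le

lemma mul_exp_neg_mul_contractionTime {k ρ c : ℝ} (hc : 0 < c) (hk : 0 < k) (hρ : 0 < ρ) :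
    k * exp (-c * contractionTime k ρ c) = ρ := by
  have : -c * contractionTime k ρ c = -Real.log (k * ρ⁻¹) := by
    unfold contractionTime; field_simp
  rw [this, exp_neg, exp_log (by positivity), mul_inv, inv_inv, ← mul_assoc,
    mul_inv_cancel₀ hk.ne', one_mul]

section NormEquivalence

variable {E : Type*} {NG NL : E → ℝ} {k1 k2 : ℝ}

lemma le_mul_of_le_mul_of_norm_equiv (hLG : ∀ x, NL x ≤ k1 * NG x) (hGL : ∀ x, NG x ≤ k2 * NL x)
    (hk2 : 0 ≤ k2) {v w : E} {a : ℝ} (ha : 0 ≤ a) (h : NL v ≤ a * NL w) :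
    NG v ≤ k1 * k2 * a * NG w :=
  calc NG v ≤ k2 * NL v := hGL v
    _ ≤ k2 * (a * (k1 * NG w)) := by gcongr; exact h.trans (by gcongr; exact hLG w)
    _ = k1 * k2 * a * NG w := by ring

lemma one_le_mul_of_norm_equiv (hLG : ∀ x, NL x ≤ k1 * NG x) (hGL : ∀ x, NG x ≤ k2 * NL x)
    (hk2 : 0 ≤ k2) {x : E} (hx : 0 < NG x) : 1 ≤ k1 * k2 := by
  have := le_mul_of_le_mul_of_norm_equiv hLG hGL hk2 zero_le_one (v := x) (w := x) (by rw [one_mul])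
  rw [mul_one] at this
  exact (le_mul_iff_one_le_left hx).mp this

end NormEquivalence

lemma semiflow_natCast_mul_eq_iterate {α : Type*} (φ : ℝ → α → α) (hφ0 : ∀ x, φ 0 x = x)
    (hφadd : ∀ t ≥ (0:ℝ), ∀ s ≥ (0:ℝ), ∀ x, φ (t + s) x = φ t (φ s x)) {τ : ℝ} (hτ : 0 ≤ τ)
    (n : ℕ) : φ (n * τ) = (φ τ)^[n] := by
  induction n with
  | zero => funext x; simp [hφ0]
  | succ n ih =>
    funext x
    rw [Function.iterate_succ_apply', ← ih, Nat.cast_succ, add_one_mul, add_comm,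
      hφadd τ hτ _ (by positivity)]

namespace Seminorm

variable {E : Type*} [AddCommGroup E] [Module ℝ E] (p : Seminorm ℝ E)

lemma exists_apply_sub_eq_of_le {x y : E} {r : ℝ} (hr : 0 ≤ r) (h : r ≤ p (y - x)) :
    ∃ z, p (z - x) = r ∧ p (y - z) = p (y - x) - r := by
  rcases (hr.trans h).eq_or_lt with hxy | hxy
  · refine ⟨x, ?_, ?_⟩ <;> simp [le_antisymm (hxy ▸ h) hr]
  refine ⟨x + (r / p (y - x)) • (y - x), ?_, ?_⟩
  · rw [add_sub_cancel_left, map_smul_eq_mul, Real.norm_eq_abs, abs_of_nonneg (by positivity)]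
    field_simp
  · have hle : r / p (y - x) ≤ 1 := (div_le_one hxy).mpr h
    rw [show y - (x + (r / p (y - x)) • (y - x)) = (1 - r / p (y - x)) • (y - x) by
      rw [sub_smul, one_smul]; abel, map_smul_eq_mul, Real.norm_eq_abs,
      abs_of_nonneg (sub_nonneg.mpr hle)]
    field_simp

variable {f : E → E} {x : E} {r ρ : ℝ}

lemma apply_sub_le_max (hf : ∀ y z, p (f y - f z) ≤ p (y - z))
    (hball : ∀ z, p (z - x) ≤ r → p (f z - x) ≤ ρ * p (z - x)) (hr : 0 ≤ r) (hρ : 0 ≤ ρ) (y : E) :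
    p (f y - x) ≤ max (p (y - x) - r * (1 - ρ)) (ρ * r) := by
  rcases le_or_gt r (p (y - x)) with hy | hy
  · obtain ⟨z, hzx, hyz⟩ := p.exists_apply_sub_eq_of_le hr hy
    refine le_max_of_le_left ?_
    calc p (f y - x) = p ((f y - f z) + (f z - x)) := by rw [sub_add_sub_cancel]
      _ ≤ p (f y - f z) + p (f z - x) := map_add_le_add p _ _
      _ ≤ (p (y - x) - r) + ρ * r := by
        gcongr
        · exact (hf y z).trans hyz.le
        · exact hzx ▸ hball z hzx.le
      _ = p (y - x) - r * (1 - ρ) := by ring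
  · exact le_max_of_le_right ((hball y hy.le).trans (by gcongr))

end Seminorm

lemma le_sub_mul_of_le_max {u : ℕ → ℝ} {δ c : ℝ} (hδ : 0 ≤ δ) (h : ∀ n, u (n + 1) ≤ max (u n - δ) c)
    (n : ℕ) (hn : c ≤ u 0 - n * δ) : u n ≤ u 0 - n * δ := by
  induction n with
  | zero => simp
  | succ n ih =>
    push_cast at hn ⊢
    have := ih (by linarith)
    exact (h n).trans (max_le (by linarith) hn)

theorem stmt4_general (E : Type*) [AddCommGroup E] [Module ℝ E]
    (NG NL : E → ℝ)
    (hGsmul : ∀ (a : ℝ) (x : E), NG (a • x) = |a| * NG x)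
    (hGadd : ∀ x y, NG (x + y) ≤ NG x + NG y)
    (k1 k2 k : ℝ) (hk2 : 0 < k2) (hk : k = k1 * k2)
    (hLG : ∀ x, NL x ≤ k1 * NG x) (hGL : ∀ x, NG x ≤ k2 * NL x)
    (φ : ℝ → E → E)
    (hφ0 : ∀ x : E, φ 0 x = x)
    (hφadd : ∀ t ≥ (0:ℝ), ∀ s ≥ (0:ℝ), ∀ x : E, φ (t + s) x = φ t (φ s x))
    (hnonexp : ∀ t ≥ (0:ℝ), ∀ x y : E, NG (φ t x - φ t y) ≤ NG (x - y))
    (xs : E) (cexp r : ℝ) (hc : 0 < cexp) (hr : 0 < r)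
    (hcontr : ∀ y, NG (y - xs) ≤ r → ∀ t ≥ (0:ℝ),
      NL (φ t y - xs) ≤ Real.exp (-cexp * t) * NL (y - xs))
    (ρ tρ : ℝ) (hρ0 : 0 < ρ) (hρ1 : ρ < 1)
    (htρ : tρ = Real.log (k * ρ⁻¹) / cexp)
    (x0 : E) (hx0 : r < NG (x0 - xs)) :
    ∀ i : ℕ, (i : ℝ) * r * (1 - ρ) ≤ NG (x0 - xs) - r →
      NG (φ ((i : ℝ) * tρ) x0 - xs) ≤ NG (x0 - xs) - (i : ℝ) * r * (1 - ρ) := by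
  intro i hi
  replace htρ : tρ = contractionTime k ρ cexp := htρ
  have hk1 : 1 ≤ k := hk ▸ one_le_mul_of_norm_equiv hLG hGL hk2.le (hr.trans hx0)
  have htρ0 : 0 ≤ tρ := htρ ▸ contractionTime_nonneg hc hk1 hρ0 hρ1.le
  have hkρ : k * exp (-cexp * tρ) = ρ := htρ ▸ mul_exp_neg_mul_contractionTime hc (by linarith) hρ0
  have hball (z : E) (hz : NG (z - xs) ≤ r) : NG (φ tρ z - xs) ≤ ρ * NG (z - xs) := by
    have := le_mul_of_le_mul_of_norm_equiv hLG hGL hk2.le (exp_pos _).le (hcontr z hz tρ htρ0)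
    rwa [← hk, hkρ] at this
  let p : Seminorm ℝ E := .of NG hGadd (by simpa only [Real.norm_eq_abs] using hGsmul)
  have hstep := p.apply_sub_le_max (hnonexp tρ htρ0) hball hr.le hρ0.le
  rw [semiflow_natCast_mul_eq_iterate φ hφ0 hφadd htρ0, mul_assoc]
  refine le_sub_mul_of_le_max (u := fun n ↦ p ((φ tρ)^[n] x0 - xs)) (mul_nonneg hr.le (by linarith))
    (fun n ↦ by simpa only [Function.iterate_succ_apply'] using hstep _) i ?_
  show ρ * r ≤ NG (x0 - xs) - i * (r * (1 - ρ))
  linarith [mul_le_of_le_one_left hr.le hρ1.le]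

/-- iterating the ρ-contraction-time decrement. For a semiflow
that is nonexpansive in `N_G` and exponentially contracting toward the
equilibrium `x*` in `N_L` on the `N_G`-ball of radius `r`, after `i` steps of
duration `t_ρ = ln(k·ρ⁻¹)/c_exp` the `N_G`-distance to `x*` has decreased by
at least `i·r·(1−ρ)`, as long as `i·r·(1−ρ) ≤ N_G(x0−x*) − r`. -/
theorem stmt4 (E : Type*) [AddCommGroup E] [Module ℝ E] [FiniteDimensional ℝ E]
    (NG NL : E → ℝ)
    (hGnn : ∀ x, 0 ≤ NG x) (hGdef : ∀ x, NG x = 0 ↔ x = 0)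
    (hGsmul : ∀ (a : ℝ) (x : E), NG (a • x) = |a| * NG x)
    (hGadd : ∀ x y, NG (x + y) ≤ NG x + NG y)
    (hLnn : ∀ x, 0 ≤ NL x) (hLdef : ∀ x, NL x = 0 ↔ x = 0)
    (hLsmul : ∀ (a : ℝ) (x : E), NL (a • x) = |a| * NL x)
    (hLadd : ∀ x y, NL (x + y) ≤ NL x + NL y)
    (k1 k2 k : ℝ) (hk1 : 0 < k1) (hk2 : 0 < k2) (hk : k = k1 * k2)
    (hLG : ∀ x, NL x ≤ k1 * NG x) (hGL : ∀ x, NG x ≤ k2 * NL x)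
    (φ : ℝ → E → E)
    (hφ0 : ∀ x : E, φ 0 x = x)
    (hφadd : ∀ t ≥ (0:ℝ), ∀ s ≥ (0:ℝ), ∀ x : E, φ (t + s) x = φ t (φ s x))
    (hnonexp : ∀ t ≥ (0:ℝ), ∀ x y : E, NG (φ t x - φ t y) ≤ NG (x - y))
    (xs : E) (cexp r : ℝ) (hc : 0 < cexp) (hr : 0 < r)
    (heq : ∀ t ≥ (0:ℝ), φ t xs = xs)
    (hcontr : ∀ y, NG (y - xs) ≤ r → ∀ t ≥ (0:ℝ),
      NL (φ t y - xs) ≤ Real.exp (-cexp * t) * NL (y - xs))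
    (ρ tρ : ℝ) (hρ0 : 0 < ρ) (hρ1 : ρ < 1)
    (htρ : tρ = Real.log (k * ρ⁻¹) / cexp)
    (x0 : E) (hx0 : r < NG (x0 - xs)) :
    ∀ i : ℕ, (i : ℝ) * r * (1 - ρ) ≤ NG (x0 - xs) - r →
      NG (φ ((i : ℝ) * tρ) x0 - xs) ≤ NG (x0 - xs) - (i : ℝ) * r * (1 - ρ) :=
  stmt4_general E NG NL hGsmul hGadd k1 k2 k hk2 hk hLG hGL φ hφ0 hφadd hnonexp xs cexp r hc hr
    hcontr ρ tρ hρ0 hρ1 htρ x0 hx0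
end

section
/- Let E be a finite-dimensional real vector space equipped with two norms N_G and N_L, with constants k1, k2 > 0 satisfying N_L ≤ k1·N_G and N_G ≤ k2·N_L pointwise; set k := k1·k2 (so k ≥ 1). Let φ : [0,∞) × E → E satisfy the semiflow property φ(0,x) = x and φ(t+s,x) = φ(t, φ(s,x)), together with: (i) N_G(φ(t,x) − φ(t,y)) ≤ N_G(x − y) for all t ≥ 0 and x, y ∈ E; (ii) there are x* ∈ E with φ(t,x*) = x* for all t, c_exp > 0, and r > 0 such that for every y with N_G(y − x*) ≤ r and every t ≥ 0, N_L(φ(t,y) − x*) ≤ exp(−c_exp·t)·N_L(y − x*). Let x0 satisfy N_G(x0 − x*) > r and fix ρ ∈ (0,1). Then for every t ≥ 0, N_G(φ(t,x0) − x*) ≤ linexp(t; q, c_lin, c_exp, t_c), where c_lin = c_exp·r·(1−ρ)/ln(k·ρ⁻¹), q = N_G(x0 − x*) + r·(1−ρ)·ln(k)/ln(k·ρ⁻¹), T = ⌈(N_G(x0 − x*) − r)/((1−ρ)·r)⌉, and t_c = T·ln(k·ρ⁻¹)/c_exp + ln(k)/c_exp. -/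
open Real Set

lemma exp_neg_le_secant {u V : ℝ} (hV : 0 < V) (hu0 : 0 ≤ u) (huV : u ≤ V) :
    exp (-u) ≤ 1 - (1 - exp (-V)) * (u / V) := by
  have h := convexOn_exp.2 (mem_univ 0) (mem_univ (-V))
    (sub_nonneg.2 ((div_le_one hV).2 huV)) (div_nonneg hu0 hV.le) (sub_add_cancel 1 (u / V))
  simp only [smul_eq_mul, mul_zero, zero_add, exp_zero, mul_one] at h
  rw [show u / V * -V = -u by field_simp] at h
  linarith

lemma log_mul_inv_pos {k ρ : ℝ} (hk : 1 ≤ k) (hρ0 : 0 < ρ) (hρ1 : ρ < 1) :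
    0 < log (k * ρ⁻¹) :=
  log_pos (one_lt_mul_of_le_of_lt hk ((one_lt_inv₀ hρ0).2 hρ1))

lemma le_linear_of_le_of_le_exp {k ρ r c s D x : ℝ} (hk : 1 ≤ k) (hρ0 : 0 < ρ) (hρ1 : ρ < 1)
    (hr : 0 ≤ r) (hs : c * s ≤ log (k * ρ⁻¹)) (hxD : x ≤ D)
    (hx : x ≤ D - r + k * exp (-c * s) * r) :
    x ≤ D + r * (1 - ρ) / log (k * ρ⁻¹) * (log k - c * s) := by
  have hL := log_mul_inv_pos hk hρ0 hρ1
  have hρ1' : 0 ≤ 1 - ρ := sub_nonneg.2 hρ1.le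
  rcases le_or_gt (c * s) (log k) with hsk | hsk
  · have := sub_nonneg.2 hsk
    have : 0 ≤ r * (1 - ρ) / log (k * ρ⁻¹) * (log k - c * s) := by positivity
    linarith
  set u := c * s - log k
  set V := log ρ⁻¹
  have hV : 0 < V := log_pos ((one_lt_inv₀ hρ0).2 hρ1)
  have hLV : log (k * ρ⁻¹) = log k + V := log_mul (by positivity) (by positivity)
  have hu : 0 ≤ u := by linarith
  have hku : k * exp (-c * s) = exp (-u) := by
    rw [show -u = log k + -c * s by ring, exp_add, exp_log (by positivity)]
  have hexpV : exp (-V) = ρ := by rw [exp_neg, exp_log (inv_pos.2 hρ0), inv_inv]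
  have hsec := exp_neg_le_secant hV hu (by linarith)
  rw [hexpV] at hsec
  -- the secant slope over `[0, V]` is steeper than the linear slope over `[0, log k + V]`
  have hslope : r * (1 - ρ) / log (k * ρ⁻¹) * u ≤ r * (1 - ρ) * (u / V) := by
    rw [div_mul_eq_mul_div, mul_div_assoc]
    gcongr
    rw [hLV]; linarith [log_nonneg hk]
  have : r * (1 - ρ) * (u / V) ≤ r * (1 - exp (-u)) := by
    rw [mul_assoc]; gcongr; linarith
  rw [hku] at hx
  linarith [show log k - c * s = -u by ring]

lemma le_sub_mul_of_step {d : ℝ → ℝ} {τ δ r d₀ : ℝ} (hτ : 0 ≤ τ) (hd₀ : d 0 ≤ d₀)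
    (hstep : ∀ t ≥ 0, ∀ D, r ≤ D → d t ≤ D → d (t + τ) ≤ D - δ) (n : ℕ)
    (hn : ∀ m < n, r ≤ d₀ - m * δ) : d (n * τ) ≤ d₀ - n * δ := by
  induction n with
  | zero => simpa using hd₀
  | succ n ih =>
    have h := hstep (n * τ) (by positivity) _ (hn n n.lt_succ_self)
      (ih fun m hm => hn m (hm.trans n.lt_succ_self))
    rw [Nat.cast_succ, add_one_mul, add_one_mul]
    linarith

lemma le_mul_exp_of_le_of_le {d : ℝ → ℝ} {k c r t₀ D t : ℝ} (hk : 0 < k) (hc : c ≠ 0)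
    (hball : ∀ t ≥ 0, d t ≤ r → ∀ s ≥ 0, d (t + s) ≤ k * exp (-c * s) * d t)
    (ht₀ : 0 ≤ t₀) (hdD : d t₀ ≤ D) (hDr : D ≤ r) (ht : t₀ ≤ t) :
    d t ≤ D * exp (-c * (t - (t₀ + log k / c))) := by
  have h := hball t₀ ht₀ (hdD.trans hDr) (t - t₀) (sub_nonneg.2 ht)
  rw [add_sub_cancel] at h
  calc d t ≤ k * exp (-c * (t - t₀)) * d t₀ := h
    _ ≤ k * exp (-c * (t - t₀)) * D := by gcongr
    _ = D * exp (-c * (t - (t₀ + log k / c))) := by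
      rw [show -c * (t - (t₀ + log k / c)) = log k + -c * (t - t₀) by field_simp; ring,
        exp_add, exp_log hk]
      ring

lemma exists_nat_mul_le_lt_add {τ t : ℝ} {N : ℕ} (hτ : 0 < τ) (ht : 0 ≤ t) (htN : t < N * τ) :
    ∃ n < N, n * τ ≤ t ∧ t < n * τ + τ := by
  refine ⟨⌊t / τ⌋₊, ?_, ?_, ?_⟩
  · exact Nat.floor_lt (div_nonneg ht hτ.le) |>.2 ((div_lt_iff₀ hτ).2 htN)
  · exact (le_div_iff₀ hτ).1 (Nat.floor_le (div_nonneg ht hτ.le))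
  · rw [← add_one_mul]; exact (div_lt_iff₀ hτ).1 (Nat.lt_floor_add_one _)

lemma le_linexp_of_staircase {d : ℝ → ℝ} {k c r ρ d₀ : ℝ} {N : ℕ} (hk : 1 ≤ k) (hc : 0 < c)
    (hr : 0 < r) (hρ0 : 0 < ρ) (hρ1 : ρ < 1) (hd₀ : d 0 ≤ d₀)
    (hN : ∀ m < N, r ≤ d₀ - m * ((1 - ρ) * r)) (hNr : d₀ - N * ((1 - ρ) * r) ≤ r)
    (hanti : AntitoneOn d (Ici 0))
    (hstep : ∀ t ≥ 0, ∀ s ≥ 0, ∀ D, r ≤ D → d t ≤ D → d (t + s) ≤ D - r + k * exp (-c * s) * r)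
    (hball : ∀ t ≥ 0, d t ≤ r → ∀ s ≥ 0, d (t + s) ≤ k * exp (-c * s) * d t) :
    ∀ t ≥ 0, d t ≤ linexp (d₀ + r * (1 - ρ) * log k / log (k * ρ⁻¹))
      (c * r * (1 - ρ) / log (k * ρ⁻¹)) c (N * log (k * ρ⁻¹) / c + log k / c) t := by
  intro t ht
  set L := log (k * ρ⁻¹)
  have hL : 0 < L := log_mul_inv_pos hk hρ0 hρ1
  set τ := L / c with hτ_def
  have hτ : 0 < τ := div_pos hL hc
  have hkτ : k * exp (-c * τ) = ρ := by
    rw [hτ_def, show -c * (L / c) = -L by field_simp, exp_neg, exp_log (by positivity)]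
    field_simp
  set δ := (1 - ρ) * r with hδ_def
  have hstair : ∀ n ≤ N, d (n * τ) ≤ d₀ - n * δ := by
    refine fun n hn => le_sub_mul_of_step hτ.le hd₀ (fun t ht D hD hdD => ?_) n
      fun m hm => hN m (hm.trans_le hn)
    have := hstep t ht τ hτ.le D hD hdD
    rw [hkτ] at this; linarith
  have hlin : ∀ (n : ℕ) (t : ℝ), d₀ + r * (1 - ρ) * log k / L - c * r * (1 - ρ) / L * t =
      d₀ - n * δ + r * (1 - ρ) / L * (log k - c * (t - n * τ)) := by
    intro n t; rw [hτ_def, hδ_def]; field_simp; ring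
  have htc : N * L / c + log k / c = N * τ + log k / c := by rw [mul_div_assoc]
  rw [htc]
  have hqtc := hlin N (N * τ + log k / c)
  rw [add_sub_cancel_left, mul_div_cancel₀ _ hc.ne', sub_self, mul_zero, add_zero] at hqtc
  unfold linexp
  split_ifs with htc_le
  · rcases le_or_gt (N * τ) t with hNt | hNt
    · have hclin : 0 ≤ c * r * (1 - ρ) / L := by have := sub_pos.2 hρ1; positivity
      calc d t ≤ d (N * τ) := hanti (mem_Ici.2 (by positivity)) ht hNt
        _ ≤ d₀ - N * δ := hstair N le_rfl
        _ = _ := hqtc.symm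
        _ ≤ _ := by gcongr
    obtain ⟨n, hnN, hnt, htn⟩ := exists_nat_mul_le_lt_add hτ ht hNt
    have hn0 : (0:ℝ) ≤ n * τ := by positivity
    rw [hlin n]
    refine le_linear_of_le_of_le_exp hk hρ0 hρ1 hr.le ?_
      ((hanti hn0 ht hnt).trans (hstair n hnN.le)) ?_
    · have : c * (t - n * τ) ≤ c * τ := by gcongr; linarith
      rwa [hτ_def, mul_div_cancel₀ _ hc.ne'] at this
    · have := hstep _ hn0 (t - n * τ) (sub_nonneg.2 hnt) _ (hN n hnN) (hstair n hnN.le)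
      rwa [add_sub_cancel] at this
  · rw [hqtc]
    refine le_mul_exp_of_le_of_le (by positivity) hc.ne' hball (by positivity)
      (hstair N le_rfl) hNr ?_
    have := div_nonneg (log_nonneg hk) hc.le
    linarith

theorem le_linexp_of_step_bounds {d : ℝ → ℝ} {k c r ρ d₀ clin q T tc : ℝ} (hk : 1 ≤ k)
    (hc : 0 < c) (hr : 0 < r) (hρ0 : 0 < ρ) (hρ1 : ρ < 1) (hrd₀ : r ≤ d₀) (hd₀ : d 0 ≤ d₀)
    (hanti : AntitoneOn d (Ici 0))
    (hstep : ∀ t ≥ 0, ∀ s ≥ 0, ∀ D, r ≤ D → d t ≤ D → d (t + s) ≤ D - r + k * exp (-c * s) * r)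
    (hball : ∀ t ≥ 0, d t ≤ r → ∀ s ≥ 0, d (t + s) ≤ k * exp (-c * s) * d t)
    (hclin : clin = c * r * (1 - ρ) / log (k * ρ⁻¹))
    (hq : q = d₀ + r * (1 - ρ) * log k / log (k * ρ⁻¹))
    (hT : T = (⌈(d₀ - r) / ((1 - ρ) * r)⌉ : ℤ))
    (htc : tc = T * log (k * ρ⁻¹) / c + log k / c) :
    ∀ t ≥ 0, d t ≤ linexp q clin c tc t := by
  have hδ : 0 < (1 - ρ) * r := mul_pos (sub_pos.2 hρ1) hr
  have hX : 0 ≤ (d₀ - r) / ((1 - ρ) * r) := div_nonneg (sub_nonneg.2 hrd₀) hδ.le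
  rw [← Int.natCast_ceil_eq_ceil hX, Int.cast_natCast] at hT
  subst hclin hq hT htc
  refine le_linexp_of_staircase hk hc hr hρ0 hρ1 hd₀ (fun m hm => ?_) ?_ hanti hstep hball
  · have := Nat.lt_ceil.1 hm
    rw [lt_div_iff₀ hδ] at this; linarith
  · have := Nat.le_ceil ((d₀ - r) / ((1 - ρ) * r))
    rw [div_le_iff₀ hδ] at this; linarith

lemma le_mul_of_le_mul_of_equiv {α : Type*} {NG NL : α → ℝ} {k₁ k₂ a : ℝ} (hk₂ : 0 ≤ k₂)
    (ha : 0 ≤ a) (hLG : ∀ x, NL x ≤ k₁ * NG x) (hGL : ∀ x, NG x ≤ k₂ * NL x) {u v : α}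
    (h : NL u ≤ a * NL v) : NG u ≤ k₁ * k₂ * a * NG v :=
  calc NG u ≤ k₂ * NL u := hGL u
    _ ≤ k₂ * (a * (k₁ * NG v)) := by gcongr; exact h.trans (by gcongr; exact hLG v)
    _ = k₁ * k₂ * a * NG v := by ring

section Flow

variable {E : Type*} [AddCommGroup E]

lemma antitoneOn_dist_flow {NG : E → ℝ} {φ : ℝ → E → E} {xs : E}
    (hφadd : ∀ t ≥ (0:ℝ), ∀ s ≥ (0:ℝ), ∀ x : E, φ (t + s) x = φ t (φ s x))
    (hnonexp : ∀ t ≥ (0:ℝ), ∀ x y : E, NG (φ t x - φ t y) ≤ NG (x - y))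
    (heq : ∀ t ≥ (0:ℝ), φ t xs = xs) (x : E) :
    AntitoneOn (fun t => NG (φ t x - xs)) (Ici 0) := by
  intro t₁ ht₁ t₂ _ h
  have hs : 0 ≤ t₂ - t₁ := sub_nonneg.2 h
  calc NG (φ t₂ x - xs) = NG (φ (t₂ - t₁) (φ t₁ x) - φ (t₂ - t₁) xs) := by
        rw [← hφadd _ hs _ ht₁, sub_add_cancel, heq _ hs]
    _ ≤ NG (φ t₁ x - xs) := hnonexp _ hs _ _

lemma dist_map_le_of_nonexpansive [Module ℝ E] {NG : E → ℝ}
    (hsmul : ∀ (a : ℝ) (x : E), NG (a • x) = |a| * NG x)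
    (hadd : ∀ x y, NG (x + y) ≤ NG x + NG y)
    {g : E → E} {xs y : E} {r a D : ℝ} (hr : 0 ≤ r) (ha : 0 ≤ a)
    (hg : ∀ x y, NG (g x - g y) ≤ NG (x - y))
    (hball : ∀ y, NG (y - xs) ≤ r → NG (g y - xs) ≤ a * NG (y - xs))
    (hrD : r ≤ D) (hyD : NG (y - xs) ≤ D) : NG (g y - xs) ≤ D - r + a * r := by
  set d := NG (y - xs)
  rcases le_or_gt d r with hdr | hrd
  · have := mul_le_mul_of_nonneg_left hdr ha
    linarith [hball y hdr]
  have hd : 0 < d := hr.trans_lt hrd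
  set y' := xs + (r / d) • (y - xs)
  have hy' : NG (y' - xs) = r := by
    rw [add_sub_cancel_left, hsmul, abs_of_nonneg (by positivity), div_mul_cancel₀ _ hd.ne']
  have hyy' : NG (y - y') = d - r := by
    rw [show y - y' = (1 - r / d) • (y - xs) by simp only [y', sub_smul, one_smul]; abel,
      hsmul, abs_of_nonneg (sub_nonneg.2 ((div_le_one hd).2 hrd.le)), sub_mul,
      div_mul_cancel₀ _ hd.ne', one_mul]
  calc NG (g y - xs) ≤ NG (g y - g y') + NG (g y' - xs) := by
        simpa using hadd (g y - g y') (g y' - xs)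
    _ ≤ (d - r) + a * r := by
        gcongr
        · exact hyy' ▸ hg y y'
        · exact hy' ▸ hball y' hy'.le
    _ ≤ D - r + a * r := by linarith

end Flow

theorem stmt5_general (E : Type*) [AddCommGroup E] [Module ℝ E]
    (NG NL : E → ℝ)
    (hGsmul : ∀ (a : ℝ) (x : E), NG (a • x) = |a| * NG x)
    (hGadd : ∀ x y, NG (x + y) ≤ NG x + NG y)
    (k1 k2 k : ℝ) (hk2 : 0 < k2) (hk : k = k1 * k2)
    (hLG : ∀ x, NL x ≤ k1 * NG x) (hGL : ∀ x, NG x ≤ k2 * NL x)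
    (φ : ℝ → E → E)
    (hφ0 : ∀ x : E, φ 0 x = x)
    (hφadd : ∀ t ≥ (0:ℝ), ∀ s ≥ (0:ℝ), ∀ x : E, φ (t + s) x = φ t (φ s x))
    (hnonexp : ∀ t ≥ (0:ℝ), ∀ x y : E, NG (φ t x - φ t y) ≤ NG (x - y))
    (xs : E) (cexp r : ℝ) (hc : 0 < cexp) (hr : 0 < r)
    (heq : ∀ t ≥ (0:ℝ), φ t xs = xs)
    (hcontr : ∀ y, NG (y - xs) ≤ r → ∀ t ≥ (0:ℝ),
      NL (φ t y - xs) ≤ Real.exp (-cexp * t) * NL (y - xs))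
    (x0 : E) (hx0 : r < NG (x0 - xs))
    (ρ : ℝ) (hρ0 : 0 < ρ) (hρ1 : ρ < 1)
    (clin q T tc : ℝ)
    (hclin : clin = cexp * r * (1 - ρ) / Real.log (k * ρ⁻¹))
    (hq : q = NG (x0 - xs) + r * (1 - ρ) * Real.log k / Real.log (k * ρ⁻¹))
    (hT : T = (⌈(NG (x0 - xs) - r) / ((1 - ρ) * r)⌉ : ℤ))
    (htc : tc = T * Real.log (k * ρ⁻¹) / cexp + Real.log k / cexp) :
    ∀ t ≥ (0:ℝ), NG (φ t x0 - xs) ≤ linexp q clin cexp tc t := by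
  have hk_one : 1 ≤ k := by
    have hd₀ : 0 < NG (x0 - xs) := hr.trans hx0
    have := (hGL (x0 - xs)).trans (mul_le_mul_of_nonneg_left (hLG (x0 - xs)) hk2.le)
    rw [hk]; nlinarith
  have hball : ∀ y, NG (y - xs) ≤ r → ∀ s ≥ (0:ℝ),
      NG (φ s y - xs) ≤ k * exp (-cexp * s) * NG (y - xs) := fun y hy s hs =>
    hk ▸ le_mul_of_le_mul_of_equiv hk2.le (exp_pos _).le hLG hGL (hcontr y hy s hs)
  have hflow : ∀ t ≥ (0:ℝ), ∀ s ≥ (0:ℝ), φ (t + s) x0 = φ s (φ t x0) := fun t ht s hs => by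
    rw [add_comm, hφadd s hs t ht]
  refine le_linexp_of_step_bounds hk_one hc hr hρ0 hρ1 hx0.le (by rw [hφ0])
    (antitoneOn_dist_flow hφadd hnonexp heq x0) (fun t ht s hs D hD hdD => ?_)
    (fun t ht hdr s hs => ?_) hclin hq hT htc
  · rw [hflow t ht s hs]
    exact dist_map_le_of_nonexpansive hGsmul hGadd hr.le (by positivity) (hnonexp s hs)
      (fun y hy => hball y hy s hs) hD hdD
  · rw [hflow t ht s hs]
    exact hball _ hdr s hs

/-- linear-exponential convergence of a semiflow that is
globally weakly contracting (nonexpansive) w.r.t. `N_G` and locally strongly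
contracting toward the equilibrium `x*` w.r.t. `N_L` on the `N_G`-ball of
radius `r`, for initial conditions outside the ball. -/
theorem stmt5 (E : Type*) [AddCommGroup E] [Module ℝ E] [FiniteDimensional ℝ E]
    (NG NL : E → ℝ)
    (hGnn : ∀ x, 0 ≤ NG x) (hGdef : ∀ x, NG x = 0 ↔ x = 0)
    (hGsmul : ∀ (a : ℝ) (x : E), NG (a • x) = |a| * NG x)
    (hGadd : ∀ x y, NG (x + y) ≤ NG x + NG y)
    (hLnn : ∀ x, 0 ≤ NL x) (hLdef : ∀ x, NL x = 0 ↔ x = 0)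
    (hLsmul : ∀ (a : ℝ) (x : E), NL (a • x) = |a| * NL x)
    (hLadd : ∀ x y, NL (x + y) ≤ NL x + NL y)
    (k1 k2 k : ℝ) (hk1 : 0 < k1) (hk2 : 0 < k2) (hk : k = k1 * k2)
    (hLG : ∀ x, NL x ≤ k1 * NG x) (hGL : ∀ x, NG x ≤ k2 * NL x)
    (φ : ℝ → E → E)
    (hφ0 : ∀ x : E, φ 0 x = x)
    (hφadd : ∀ t ≥ (0:ℝ), ∀ s ≥ (0:ℝ), ∀ x : E, φ (t + s) x = φ t (φ s x))
    (hnonexp : ∀ t ≥ (0:ℝ), ∀ x y : E, NG (φ t x - φ t y) ≤ NG (x - y))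
    (xs : E) (cexp r : ℝ) (hc : 0 < cexp) (hr : 0 < r)
    (heq : ∀ t ≥ (0:ℝ), φ t xs = xs)
    (hcontr : ∀ y, NG (y - xs) ≤ r → ∀ t ≥ (0:ℝ),
      NL (φ t y - xs) ≤ Real.exp (-cexp * t) * NL (y - xs))
    (x0 : E) (hx0 : r < NG (x0 - xs))
    (ρ : ℝ) (hρ0 : 0 < ρ) (hρ1 : ρ < 1)
    (clin q T tc : ℝ)
    (hclin : clin = cexp * r * (1 - ρ) / Real.log (k * ρ⁻¹))
    (hq : q = NG (x0 - xs) + r * (1 - ρ) * Real.log k / Real.log (k * ρ⁻¹))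
    (hT : T = (⌈(NG (x0 - xs) - r) / ((1 - ρ) * r)⌉ : ℤ))
    (htc : tc = T * Real.log (k * ρ⁻¹) / cexp + Real.log k / cexp) :
    ∀ t ≥ (0:ℝ), NG (φ t x0 - xs) ≤ linexp q clin cexp tc t :=
  stmt5_general E NG NL hGsmul hGadd k1 k2 k hk2 hk hLG hGL φ hφ0 hφadd hnonexp xs cexp r hc hr heq
    hcontr x0 hx0 ρ hρ0 hρ1 clin q T tc hclin hq hT htc
end

section
/- Let n, m be positive integers, A an m × n real matrix, γ > 0 a real number, and G an m × m real symmetric matrix such that G and I_m − G are both positive semidefinite. Let M be the (n+m) × (n+m) block matrix M = [[−γ⁻¹·AᵀGA, −AᵀG], [GA, γ·(G − I_m)]]. Then the matrix −(M + Mᵀ) is positive semidefinite; equivalently, xᵀMx ≤ 0 for every x ∈ ℝ^{n+m}. -/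
/-! The off-diagonal blocks `-AᵀG` and `GA` of `M` are negative transposes of each other (as `G`
is symmetric), so they cancel in `M + Mᵀ`, leaving the block-diagonal matrix
`-2 • diag(γ⁻¹ • AᵀGA, γ • (1 - G))`; both blocks are positive semidefinite because `G` and
`1 - G` are. -/

open Matrix

namespace Matrix

variable {m n R : Type*} [Fintype m] [Fintype n] [CommRing R] [PartialOrder R] [StarRing R]
  [StarOrderedRing R]

theorem PosSemidef.fromBlocks_zero {P : Matrix m m R} {Q : Matrix n n R}
    (hP : P.PosSemidef) (hQ : Q.PosSemidef) : (fromBlocks P 0 0 Q).PosSemidef := by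
  classical
  let E₁ : Matrix m (m ⊕ n) R := fromCols 1 0
  let E₂ : Matrix n (m ⊕ n) R := fromCols 0 1
  have hsplit : fromBlocks P 0 0 Q = E₁ᴴ * P * E₁ + E₂ᴴ * Q * E₂ := by
    simp only [E₁, E₂, conjTranspose_fromCols_eq_fromRows_conjTranspose, fromRows_mul]
    ext (i | i) (j | j) <;> simp
  rw [hsplit]
  exact (hP.conjTranspose_mul_mul_same _).add (hQ.conjTranspose_mul_mul_same _)

theorem dotProduct_mulVec_nonpos_of_posSemidef_neg_add_transpose {M : Matrix m m ℝ}
    (hM : (-(M + Mᵀ)).PosSemidef) (x : m → ℝ) : x ⬝ᵥ M *ᵥ x ≤ 0 := by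
  have h := hM.dotProduct_mulVec_nonneg x
  rw [star_trivial, neg_mulVec, dotProduct_neg, add_mulVec, dotProduct_add,
    dotProduct_transpose_mulVec] at h
  linarith

end Matrix

section PrimalDual

variable {m n : Type*} [Fintype m] [DecidableEq m] {R : Type*} [Field R]

def primalDualJacobian (A : Matrix m n R) (G : Matrix m m R) (γ : R) :
    Matrix (n ⊕ m) (n ⊕ m) R :=
  fromBlocks (-(γ⁻¹ • (Aᵀ * G * A))) (-(Aᵀ * G)) (G * A) (γ • (G - 1))

theorem neg_add_transpose_primalDualJacobian (A : Matrix m n R) {G : Matrix m m R}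
    (hG : Gᵀ = G) (γ : R) :
    -(primalDualJacobian A G γ + (primalDualJacobian A G γ)ᵀ) =
      fromBlocks ((2 * γ⁻¹) • (Aᵀ * G * A)) 0 0 ((2 * γ) • (1 - G)) := by
  rw [primalDualJacobian, fromBlocks_transpose, fromBlocks_add, fromBlocks_neg, fromBlocks_inj]
  simp only [transpose_neg, transpose_smul, transpose_mul, transpose_transpose,
    transpose_sub, transpose_one, hG, Matrix.mul_assoc]
  refine ⟨by module, by abel, by abel, by module⟩

theorem posSemidef_neg_add_transpose_primalDualJacobian [Fintype n] (A : Matrix m n ℝ)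
    {G : Matrix m m ℝ} {γ : ℝ} (hγ : 0 < γ) (hG : G.PosSemidef) (hIG : (1 - G).PosSemidef) :
    (-(primalDualJacobian A G γ + (primalDualJacobian A G γ)ᵀ)).PosSemidef := by
  rw [neg_add_transpose_primalDualJacobian A (isHermitian_iff_isSymm.mp hG.isHermitian)]
  refine .fromBlocks_zero (.smul ?_ (by positivity)) (hIG.smul (by positivity))
  simpa using hG.conjTranspose_mul_mul_same A

end PrimalDual

theorem stmt11_general (n m : ℕ)
    (A : Matrix (Fin m) (Fin n) ℝ) (γ : ℝ) (hγ : 0 < γ)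
    (G : Matrix (Fin m) (Fin m) ℝ)
    (hG : G.PosSemidef)
    (hIG : ((1 : Matrix (Fin m) (Fin m) ℝ) - G).PosSemidef)
    (M : Matrix (Fin n ⊕ Fin m) (Fin n ⊕ Fin m) ℝ)
    (hM : M = Matrix.fromBlocks
      (-(γ⁻¹ • (Aᵀ * G * A))) (-(Aᵀ * G)) (G * A) (γ • (G - 1))) :
    (-(M + Mᵀ)).PosSemidef ∧ ∀ x : Fin n ⊕ Fin m → ℝ, x ⬝ᵥ M.mulVec x ≤ 0 := by
  obtain rfl : M = primalDualJacobian A G γ := hM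
  have hJ := posSemidef_neg_add_transpose_primalDualJacobian A hγ hG hIG
  exact ⟨hJ, dotProduct_mulVec_nonpos_of_posSemidef_neg_add_transpose hJ⟩

/-- the Jacobian block matrix of the augmented primal-dual
dynamics for a linear program has `μ₂(M) ≤ 0`: `-(M + Mᵀ)` is positive
semidefinite, equivalently `xᵀMx ≤ 0` for all `x`. -/
theorem stmt11 (n m : ℕ) (hn : 0 < n) (hm : 0 < m)
    (A : Matrix (Fin m) (Fin n) ℝ) (γ : ℝ) (hγ : 0 < γ)
    (G : Matrix (Fin m) (Fin m) ℝ) (hGsymm : G.IsSymm)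
    (hG : G.PosSemidef)
    (hIG : ((1 : Matrix (Fin m) (Fin m) ℝ) - G).PosSemidef)
    (M : Matrix (Fin n ⊕ Fin m) (Fin n ⊕ Fin m) ℝ)
    (hM : M = Matrix.fromBlocks
      (-(γ⁻¹ • (Aᵀ * G * A))) (-(Aᵀ * G)) (G * A) (γ • (G - 1))) :
    (-(M + Mᵀ)).PosSemidef ∧ ∀ x : Fin n ⊕ Fin m → ℝ, x ⬝ᵥ M.mulVec x ≤ 0 :=
  stmt11_general n m A γ hγ G hG hIG M hM
end
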